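/- Let A, X, Z_1, …, Z_K, Γ̃, U be real N×T matrices with A ≠ 0, β ∈ ℝ, δ ∈ ℝ^K, and b > 0. Suppose Ỹ = Xβ + Σ_{k=1}^K Z_k δ_k + Γ̃ + U, ⟨A, X⟩_F = 1, and ⟨A, Z_k⟩_F = 0 for all k. Then, with β̂ = ⟨A, Ỹ⟩_F and C̃ = ‖Γ̃‖_*, one has (β̂ − β)² ≤ 4 · max{ ⟨A, U⟩_F² / ‖A‖_F² , C̃² / b² } · ( ‖A‖_F² + b² · s_1(A)² ). -/

import Mathlib

open scoped BigOperators

noncomputable section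

/-- Frobenius inner product of two real `N × T` matrices. -/
def finner {N T : ℕ} (A B : Matrix (Fin N) (Fin T) ℝ) : ℝ :=
  ∑ i, ∑ t, A i t * B i t

/-- Frobenius norm of a real `N × T` matrix. -/
def fnorm {N T : ℕ} (A : Matrix (Fin N) (Fin T) ℝ) : ℝ :=
  Real.sqrt (finner A A)

/-- The `j`-th singular value (0-indexed, in decreasing order) of a real `N × T` matrix:
the square root of the `j`-th largest eigenvalue of `A * Aᵀ`; `0` for `j ≥ N`. -/
def sval {N T : ℕ} (A : Matrix (Fin N) (Fin T) ℝ) (j : ℕ) : ℝ :=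
  if h : j < N then
    Real.sqrt
      ((Matrix.isHermitian_mul_conjTranspose_self A).eigenvalues
        (Tuple.sort ((Matrix.isHermitian_mul_conjTranspose_self A).eigenvalues)
          ((⟨j, h⟩ : Fin N).rev)))
  else 0

/-- Spectral norm: the largest singular value. -/
def s1 {N T : ℕ} (A : Matrix (Fin N) (Fin T) ℝ) : ℝ := sval A 0

/-- Nuclear norm: the sum of the singular values. -/
def nucNorm {N T : ℕ} (A : Matrix (Fin N) (Fin T) ℝ) : ℝ :=
  ∑ j ∈ Finset.range N, sval A j

/-! The estimation error is `β̂ - β = ⟨A, Γ̃⟩_F + ⟨A, U⟩_F`. Writing `M` for the maximum,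
`⟨A, U⟩_F² ≤ M ‖A‖_F²` and, by the trace duality `|⟨A, Γ⟩_F| ≤ s₁(A) ‖Γ‖_*`,
`⟨A, Γ̃⟩_F² ≤ s₁(A)² C̃² ≤ M b² s₁(A)²`; conclude with `(p + q)² ≤ 2 (p² + q²)`.
Trace duality comes from expanding along an orthonormal eigenbasis `(uⱼ)` of `Γ Γᵀ`:
`⟨A, Γ⟩_F = Σⱼ ⟨uⱼᵀ A, uⱼᵀ Γ⟩` with `‖uⱼᵀ Γ‖² = λⱼ(Γ Γᵀ) = sⱼ(Γ)²` and
`‖uⱼᵀ A‖² ≤ λ_max(A Aᵀ) = s₁(A)²`. -/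

open Matrix Finset

section DotProduct

variable {ι n : Type*} [Fintype ι] [Fintype n]

theorem sq_dotProduct_le (x y : n → ℝ) : (x ⬝ᵥ y) ^ 2 ≤ (x ⬝ᵥ x) * (y ⬝ᵥ y) := by
  simpa only [dotProduct, sq] using sum_mul_sq_le_sq_mul_sq univ x y

theorem OrthonormalBasis.sum_dotProduct_mul_dotProduct
    (b : OrthonormalBasis ι ℝ (EuclideanSpace ℝ n)) (x y : n → ℝ) :
    ∑ i, (b i ⬝ᵥ x) * (b i ⬝ᵥ y) = x ⬝ᵥ y := by
  have := b.sum_inner_mul_inner (WithLp.toLp 2 x) (WithLp.toLp 2 y)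
  simpa [EuclideanSpace.inner_eq_star_dotProduct, dotProduct_comm] using this

theorem OrthonormalBasis.dotProduct_self_eq_one
    (b : OrthonormalBasis ι ℝ (EuclideanSpace ℝ n)) (i : ι) : b i ⬝ᵥ b i = 1 := by
  have := inner_self_eq_one_of_norm_eq_one (𝕜 := ℝ) (b.orthonormal.1 i)
  rwa [EuclideanSpace.inner_eq_star_dotProduct, star_trivial] at this

theorem vecMul_dotProduct_vecMul_self {m : Type*} [Fintype m] (A : Matrix n m ℝ) (u : n → ℝ) :
    (u ᵥ* A) ⬝ᵥ (u ᵥ* A) = u ⬝ᵥ ((A * Aᴴ) *ᵥ u) := by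
  rw [← mulVec_mulVec, conjTranspose_eq_transpose_of_trivial, mulVec_transpose,
    dotProduct_mulVec]

variable [DecidableEq n]

theorem Matrix.IsHermitian.dotProduct_mulVec_le {H : Matrix n n ℝ} (hH : H.IsHermitian)
    {c : ℝ} (hc : ∀ i, hH.eigenvalues i ≤ c) (u : n → ℝ) :
    u ⬝ᵥ (H *ᵥ u) ≤ c * (u ⬝ᵥ u) := by
  set e := hH.eigenvectorBasis
  have hHe (i : n) : e i ⬝ᵥ (H *ᵥ u) = hH.eigenvalues i * (e i ⬝ᵥ u) := by
    rw [dotProduct_mulVec, ← mulVec_transpose, ← conjTranspose_eq_transpose_of_trivial,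
      hH.eq, hH.mulVec_eigenvectorBasis, smul_dotProduct, smul_eq_mul]
  calc u ⬝ᵥ (H *ᵥ u) = ∑ i, hH.eigenvalues i * (e i ⬝ᵥ u) ^ 2 := by
        rw [← e.sum_dotProduct_mul_dotProduct u (H *ᵥ u)]
        exact sum_congr rfl fun i _ => by rw [hHe]; ring
    _ ≤ ∑ i, c * (e i ⬝ᵥ u) ^ 2 := by gcongr with i; exact hc i
    _ = c * (u ⬝ᵥ u) := by
        simp only [← e.sum_dotProduct_mul_dotProduct u u, mul_sum, sq]

end DotProduct

variable {N T : ℕ}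

theorem finner_eq_vec_dotProduct_vec (A B : Matrix (Fin N) (Fin T) ℝ) :
    finner A B = vec A ⬝ᵥ vec B := by
  simp only [finner, dotProduct, vec, Fintype.sum_prod_type]
  exact sum_comm

theorem finner_add_right (A B C : Matrix (Fin N) (Fin T) ℝ) :
    finner A (B + C) = finner A B + finner A C := by
  simp only [finner_eq_vec_dotProduct_vec, vec_add, dotProduct_add]

theorem finner_smul_right (A B : Matrix (Fin N) (Fin T) ℝ) (c : ℝ) :
    finner A (c • B) = c * finner A B := by
  simp only [finner_eq_vec_dotProduct_vec, vec_smul, dotProduct_smul, smul_eq_mul]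

theorem finner_sum_right {ι : Type*} (A : Matrix (Fin N) (Fin T) ℝ) (s : Finset ι)
    (B : ι → Matrix (Fin N) (Fin T) ℝ) :
    finner A (∑ k ∈ s, B k) = ∑ k ∈ s, finner A (B k) := by
  simp only [finner_eq_vec_dotProduct_vec, vec_sum, dotProduct_sum]

theorem finner_self_nonneg (A : Matrix (Fin N) (Fin T) ℝ) : 0 ≤ finner A A :=
  sum_nonneg fun i _ => sum_nonneg fun t _ => mul_self_nonneg (A i t)

theorem fnorm_pos {A : Matrix (Fin N) (Fin T) ℝ} (hA : A ≠ 0) : 0 < fnorm A := by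
  rw [fnorm, Real.sqrt_pos]
  refine (finner_self_nonneg A).lt_of_ne' ?_
  rwa [finner_eq_vec_dotProduct_vec, Ne, dotProduct_self_eq_zero, vec_eq_zero_iff]

theorem finner_eq_sum_vecMul_dotProduct_vecMul
    (b : OrthonormalBasis (Fin N) ℝ (EuclideanSpace ℝ (Fin N))) (A B : Matrix (Fin N) (Fin T) ℝ) :
    finner A B = ∑ j, (b j ᵥ* A) ⬝ᵥ (b j ᵥ* B) := by
  have hcols : finner A B = ∑ t, Aᵀ t ⬝ᵥ Bᵀ t := by
    simp only [finner, dotProduct, transpose_apply]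
    exact sum_comm
  rw [hcols]
  simp_rw [← b.sum_dotProduct_mul_dotProduct (Aᵀ _)]
  rw [sum_comm]
  rfl

theorem s1_nonneg (A : Matrix (Fin N) (Fin T) ℝ) : 0 ≤ s1 A := by
  unfold s1 sval; split <;> positivity

theorem eigenvalues_le_sq_s1 (A : Matrix (Fin N) (Fin T) ℝ) (i : Fin N) :
    (isHermitian_mul_conjTranspose_self A).eigenvalues i ≤ s1 A ^ 2 := by
  set ev := (isHermitian_mul_conjTranspose_self A).eigenvalues
  have hN : 0 < N := i.pos
  rw [s1, sval, dif_pos hN, Real.sq_sqrt (eigenvalues_self_mul_conjTranspose_nonneg A _)]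
  calc ev i = ev (Tuple.sort ev ((Tuple.sort ev).symm i)) := by simp
    _ ≤ ev (Tuple.sort ev (⟨0, hN⟩ : Fin N).rev) := by
      apply Tuple.monotone_sort ev
      have := ((Tuple.sort ev).symm i).isLt
      simp only [Fin.le_def, Fin.val_rev]
      omega

theorem nucNorm_eq_sum_sqrt_eigenvalues (A : Matrix (Fin N) (Fin T) ℝ) :
    nucNorm A = ∑ i, √((isHermitian_mul_conjTranspose_self A).eigenvalues i) := by
  set ev := (isHermitian_mul_conjTranspose_self A).eigenvalues
  rw [nucNorm, ← Fin.sum_univ_eq_sum_range]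
  exact Fintype.sum_equiv (Fin.revPerm.trans (Tuple.sort ev)) _ _
    fun j => by simp only [sval, dif_pos j.isLt]; rfl

theorem vecMul_dotProduct_vecMul_self_le (A : Matrix (Fin N) (Fin T) ℝ) (u : Fin N → ℝ) :
    (u ᵥ* A) ⬝ᵥ (u ᵥ* A) ≤ s1 A ^ 2 * (u ⬝ᵥ u) := by
  rw [vecMul_dotProduct_vecMul_self]
  exact (isHermitian_mul_conjTranspose_self A).dotProduct_mulVec_le (eigenvalues_le_sq_s1 A) u

theorem abs_finner_le_s1_mul_nucNorm (A Γ : Matrix (Fin N) (Fin T) ℝ) :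
    |finner A Γ| ≤ s1 A * nucNorm Γ := by
  set hΓ := isHermitian_mul_conjTranspose_self Γ
  set e := hΓ.eigenvectorBasis
  have hΓe (j : Fin N) : (e j ᵥ* Γ) ⬝ᵥ (e j ᵥ* Γ) = hΓ.eigenvalues j := by
    rw [vecMul_dotProduct_vecMul_self, hΓ.mulVec_eigenvectorBasis, dotProduct_smul,
      e.dotProduct_self_eq_one, smul_eq_mul, mul_one]
  have hterm (j : Fin N) : |(e j ᵥ* A) ⬝ᵥ (e j ᵥ* Γ)| ≤ s1 A * √(hΓ.eigenvalues j) := by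
    rw [← Real.sqrt_sq (s1_nonneg A), ← Real.sqrt_mul (sq_nonneg _)]
    refine Real.abs_le_sqrt ((sq_dotProduct_le _ _).trans ?_)
    rw [hΓe]
    have := vecMul_dotProduct_vecMul_self_le A (e j)
    rw [e.dotProduct_self_eq_one, mul_one] at this
    exact mul_le_mul_of_nonneg_right this (eigenvalues_self_mul_conjTranspose_nonneg Γ j)
  calc |finner A Γ| = |∑ j, (e j ᵥ* A) ⬝ᵥ (e j ᵥ* Γ)| := by
        rw [finner_eq_sum_vecMul_dotProduct_vecMul e]
    _ ≤ ∑ j, |(e j ᵥ* A) ⬝ᵥ (e j ᵥ* Γ)| := abs_sum_le_sum_abs _ _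
    _ ≤ ∑ j, s1 A * √(hΓ.eigenvalues j) := sum_le_sum fun j _ => hterm j
    _ = s1 A * nucNorm Γ := by rw [nucNorm_eq_sum_sqrt_eigenvalues, mul_sum]

/-- Squared-error bound for the augmented linear estimator: with `C̃ = ‖Γ̃‖_*`,
`(β̂_A − β)² ≤ 4 · max{⟨A,U⟩_F²/‖A‖_F², C̃²/b²} · (‖A‖_F² + b² s₁(A)²)`. -/
theorem augmented_linear_estimator_squared_error_bound {N T K : ℕ}
    (A X : Matrix (Fin N) (Fin T) ℝ) (Z : Fin K → Matrix (Fin N) (Fin T) ℝ)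
    (Γtil U Ytil : Matrix (Fin N) (Fin T) ℝ)
    (β : ℝ) (δ : Fin K → ℝ) (b : ℝ) (hb : 0 < b) (hA : A ≠ 0)
    (hY : Ytil = β • X + ∑ k, δ k • Z k + Γtil + U)
    (hAX : finner A X = 1) (hAZ : ∀ k, finner A (Z k) = 0) :
    (finner A Ytil - β) ^ 2 ≤
      4 * max ((finner A U) ^ 2 / (fnorm A) ^ 2) ((nucNorm Γtil) ^ 2 / b ^ 2) *
        ((fnorm A) ^ 2 + b ^ 2 * (s1 A) ^ 2) := by
  set M := max ((finner A U) ^ 2 / (fnorm A) ^ 2) ((nucNorm Γtil) ^ 2 / b ^ 2)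
  have herror : finner A Ytil - β = finner A Γtil + finner A U := by
    simp only [hY, finner_add_right, finner_smul_right, finner_sum_right, hAX, hAZ, mul_zero,
      sum_const_zero, mul_one, add_zero]
    ring
  have hU : finner A U ^ 2 ≤ M * fnorm A ^ 2 :=
    (div_le_iff₀ (pow_pos (fnorm_pos hA) 2)).1 (le_max_left _ _)
  have hΓ : finner A Γtil ^ 2 ≤ M * (b ^ 2 * s1 A ^ 2) :=
    calc finner A Γtil ^ 2 = |finner A Γtil| ^ 2 := (sq_abs _).symm
      _ ≤ (s1 A * nucNorm Γtil) ^ 2 := by gcongr; exact abs_finner_le_s1_mul_nucNorm A Γtil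
      _ = s1 A ^ 2 * nucNorm Γtil ^ 2 := mul_pow _ _ _
      _ ≤ s1 A ^ 2 * (M * b ^ 2) :=
          mul_le_mul_of_nonneg_left ((div_le_iff₀ (pow_pos hb 2)).1 (le_max_right _ _))
            (sq_nonneg _)
      _ = M * (b ^ 2 * s1 A ^ 2) := by ring
  rw [herror]
  linarith [add_sq_le (a := finner A Γtil) (b := finner A U), sq_nonneg (finner A Γtil),
    sq_nonneg (finner A U)]

end
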